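/- The algebra A_2 = ⟨A_2; t⟩ is 2-step supernilpotent: for every 3-dimensional cube h ∈ M(1,1,1) (the subalgebra of A_2^8 generated by the cubes γ_0^3(x,y), γ_1^3(x,y), γ_2^3(x,y) for x,y ∈ A_2), if all three vertical support lines of h are constant, then the vertical pivot line of h is constant. -/
import Mathlib


/-- The carrier of the algebra `𝔸₂ = ⟨A₂; t⟩`: `O = {oᵢʲ}`, `R = {rᵢʲ}`, and
`G` the set of formal products, so that `A2.g : A2² → G` is a fixed injection. -/
inductive A2 : Type where
  | o (i j : ℕ) : A2
  | r (i j : ℕ) : A2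
  | g (x y : A2) : A2
deriving DecidableEq

/-- The binary operation `t` of `𝔸₂`:
`t(r₄ᵢʲ, r₄ᵢʲ) = t(r₄ᵢʲ, r₄ᵢ₊₂ʲ) = oᵢʲ`, `t(r₄ᵢ₊₂ʲ, r₄ᵢʲ) = rᵢʲ⁺¹`,
`t(r₄ᵢ₊₂ʲ, r₄ᵢ₊₂ʲ) = rᵢ₊₁ʲ⁺¹`, and otherwise `t(x,y) = s(x,y)` for a fixed
injection `s : A₂² → G`. -/
def t2 : A2 → A2 → A2 :=
  fun x y =>
    match x, y with
    | .r a j, .r b l =>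
        if l = j ∧ a % 4 = 0 ∧ (b = a ∨ b = a + 2) then .o (a / 4) j
        else if l = j ∧ a % 4 = 2 ∧ b + 2 = a then .r (a / 4) (j + 1)
        else if l = j ∧ a % 4 = 2 ∧ b = a then .r (a / 4 + 1) (j + 1)
        else .g x y
    | x, y => .g x y

/-- `M(1,1,1)`: the subalgebra of `𝔸₂^(2³)` (coordinatewise `t`) generated by
the cubes `γᵢ³(x,y)` for `i ∈ 3`, `x, y ∈ A₂`. -/
inductive M111 : ((Fin 3 → Bool) → A2) → Prop where
  | gen (i : Fin 3) (x y : A2) : M111 (fun f => if f i then y else x)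
  | app (a b : (Fin 3 → Bool) → A2) :
      M111 a → M111 b → M111 (fun f => t2 (a f) (b f))

lemma t2_rr (a j b l : ℕ) : t2 (A2.r a j) (A2.r b l) =
    if l = j ∧ a % 4 = 0 ∧ (b = a ∨ b = a + 2) then A2.o (a / 4) j
    else if l = j ∧ a % 4 = 2 ∧ b + 2 = a then A2.r (a / 4) (j + 1)
    else if l = j ∧ a % 4 = 2 ∧ b = a then A2.r (a / 4 + 1) (j + 1)
    else A2.g (A2.r a j) (A2.r b l) := rfl

lemma t2_spec (x y : A2) :
    (∃ c j, x = A2.r (4*c) j ∧ (y = A2.r (4*c) j ∨ y = A2.r (4*c+2) j) ∧ t2 x y = A2.o c j) ∨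
    (∃ s j, x = A2.r (4*s+2) j ∧ y = A2.r (4*s) j ∧ t2 x y = A2.r s (j+1)) ∨
    (∃ s j, x = A2.r (4*s+2) j ∧ y = A2.r (4*s+2) j ∧ t2 x y = A2.r (s+1) (j+1)) ∨
    (t2 x y = A2.g x y) := by
  cases x with
  | r a j =>
    cases y with
    | r b l =>
      rw [t2_rr]
      split_ifs with h1 h2 h3
      · obtain ⟨rfl, h4, h5⟩ := h1
        refine Or.inl ⟨a/4, l, ?_, ?_, rfl⟩
        · congr 1; omega
        · rcases h5 with h5 | h5
          · left; congr 1; omega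
          · right; congr 1; omega
      · obtain ⟨rfl, h4, h5⟩ := h2
        refine Or.inr (Or.inl ⟨a/4, l, ?_, ?_, rfl⟩)
        · congr 1; omega
        · congr 1; omega
      · obtain ⟨rfl, h4, h5⟩ := h3
        refine Or.inr (Or.inr (Or.inl ⟨a/4, l, ?_, ?_, rfl⟩))
        · congr 1; omega
        · congr 1; omega
      · exact Or.inr (Or.inr (Or.inr rfl))
    | o i j' => exact Or.inr (Or.inr (Or.inr rfl))
    | g u v => exact Or.inr (Or.inr (Or.inr rfl))
  | o i j => exact Or.inr (Or.inr (Or.inr rfl))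
  | g u v => exact Or.inr (Or.inr (Or.inr rfl))

lemma t2_eq {x y x' y' : A2} (h : t2 x y = t2 x' y') :
    (x = x' ∧ y = y') ∨
    (∃ c j, x = A2.r (4*c) j ∧ x' = A2.r (4*c) j ∧
      ((y = A2.r (4*c) j ∧ y' = A2.r (4*c+2) j) ∨ (y = A2.r (4*c+2) j ∧ y' = A2.r (4*c) j))) ∨
    (∃ m j, (x = A2.r (4*m+6) j ∧ y = A2.r (4*m+4) j ∧ x' = A2.r (4*m+2) j ∧ y' = A2.r (4*m+2) j) ∨
            (x = A2.r (4*m+2) j ∧ y = A2.r (4*m+2) j ∧ x' = A2.r (4*m+6) j ∧ y' = A2.r (4*m+4) j)) := by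
  rcases t2_spec x y with ⟨c, j, hx, hy, ho⟩ | ⟨s, j, hx, hy, ho⟩ | ⟨s, j, hx, hy, ho⟩ | ho <;>
    rcases t2_spec x' y' with ⟨c', j', hx', hy', ho'⟩ | ⟨s', j', hx', hy', ho'⟩ | ⟨s', j', hx', hy', ho'⟩ | ho' <;>
    rw [ho, ho'] at h
  · -- o = o
    obtain ⟨hc, hj⟩ : c = c' ∧ j = j' := by cases h; exact ⟨rfl, rfl⟩
    subst hc; subst hj
    rcases hy with hy | hy <;> rcases hy' with hy' | hy'
    · exact Or.inl ⟨hx.trans hx'.symm, hy.trans hy'.symm⟩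
    · exact Or.inr (Or.inl ⟨c, j, hx, hx', Or.inl ⟨hy, hy'⟩⟩)
    · exact Or.inr (Or.inl ⟨c, j, hx, hx', Or.inr ⟨hy, hy'⟩⟩)
    · exact Or.inl ⟨hx.trans hx'.symm, hy.trans hy'.symm⟩
  · exact absurd h (by simp)
  · exact absurd h (by simp)
  · exact absurd h (by simp)
  · exact absurd h (by simp)
  · -- B'B'
    injection h with h1 h2
    have hj : j = j' := by omega
    subst h1; subst hj
    exact Or.inl ⟨hx.trans hx'.symm, hy.trans hy'.symm⟩
  · -- B'C' : s = s'+1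
    injection h with h1 h2
    refine Or.inr (Or.inr ⟨s', j', Or.inl ⟨?_, ?_, ?_, ?_⟩⟩)
    · rw [hx]; congr 1 <;> omega
    · rw [hy]; congr 1 <;> omega
    · rw [hx']
    · rw [hy']
  · exact absurd h (by simp)
  · exact absurd h (by simp)
  · -- C'B' : s' = s+1
    injection h with h1 h2
    refine Or.inr (Or.inr ⟨s, j, Or.inr ⟨hx, hy, ?_, ?_⟩⟩)
    · rw [hx']; congr 1 <;> omega
    · rw [hy']; congr 1 <;> omega
  · -- C'C'
    injection h with h1 h2
    have hs : s = s' := by omega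
    have hj : j = j' := by omega
    subst hs; subst hj
    exact Or.inl ⟨hx.trans hx'.symm, hy.trans hy'.symm⟩
  · exact absurd h (by simp)
  · exact absurd h (by simp)
  · exact absurd h (by simp)
  · exact absurd h (by simp)
  · -- g g
    injection h with h1 h2
    exact Or.inl ⟨h1, h2⟩

lemma t2_eq_r {x y : A2} {m J : ℕ} (h : t2 x y = A2.r m J) :
    ∃ s j, J = j + 1 ∧ x = A2.r (4*s+2) j ∧
      ((y = A2.r (4*s) j ∧ m = s) ∨ (y = A2.r (4*s+2) j ∧ m = s + 1)) := by
  rcases t2_spec x y with ⟨c, j, hx, hy, ho⟩ | ⟨s, j, hx, hy, ho⟩ | ⟨s, j, hx, hy, ho⟩ | ho <;>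
    rw [ho] at h
  · exact absurd h (by simp)
  · injection h with h1 h2
    exact ⟨s, j, h2.symm, hx, Or.inl ⟨hy, h1.symm⟩⟩
  · injection h with h1 h2
    exact ⟨s, j, h2.symm, hx, Or.inr ⟨hy, h1.symm⟩⟩
  · exact absurd h (by simp)

lemma t2_o (c j d : ℕ) (hd : d = 4*c ∨ d = 4*c + 2) :
    t2 (A2.r (4*c) j) (A2.r d j) = A2.o c j := by
  rw [t2_rr, if_pos ⟨rfl, by omega, by omega⟩]
  congr 1; omega

lemma t2_collapseII (m j : ℕ) :
    t2 (A2.r (4*m+6) j) (A2.r (4*m+4) j) = t2 (A2.r (4*m+2) j) (A2.r (4*m+2) j) := by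
  rw [t2_rr, t2_rr]
  rw [if_neg (by omega), if_pos ⟨rfl, by omega, by omega⟩]
  rw [if_neg (by omega), if_neg (by omega), if_pos ⟨rfl, by omega, by omega⟩]
  congr 1; omega

lemma active {h : (Fin 3 → Bool) → A2} (hm : M111 h) :
    ∀ (i₀ i₁ j : ℕ) (c₀ c₁ : Bool),
      h ![c₀, c₁, false] = A2.r i₀ j → h ![c₀, c₁, true] = A2.r i₁ j →
      (i₀ + 2 ≤ i₁ ∨ i₁ + 2 ≤ i₀) →
      ∀ b₀ b₁ : Bool, h ![b₀, b₁, false] = A2.r i₀ j ∧ h ![b₀, b₁, true] = A2.r i₁ j := by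
  induction hm with
  | gen i x y =>
    intro i₀ i₁ j c₀ c₁ h0 h1 hd b₀ b₁
    fin_cases i
    · simp only [show (![c₀, c₁, false] : Fin 3 → Bool) 0 = c₀ from rfl,
        show (![c₀, c₁, true] : Fin 3 → Bool) 0 = c₀ from rfl] at h0 h1
      have := h0.symm.trans h1
      injection this with e1 e2
      omega
    · simp only [show (![c₀, c₁, false] : Fin 3 → Bool) 1 = c₁ from rfl,
        show (![c₀, c₁, true] : Fin 3 → Bool) 1 = c₁ from rfl] at h0 h1
      have := h0.symm.trans h1
      injection this with e1 e2
      omega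
    · simp only [show (![c₀, c₁, false] : Fin 3 → Bool) 2 = false from rfl,
        show (![c₀, c₁, true] : Fin 3 → Bool) 2 = true from rfl,
        if_true, if_false] at h0 h1
      simp only [show (![b₀, b₁, false] : Fin 3 → Bool) 2 = false from rfl,
        show (![b₀, b₁, true] : Fin 3 → Bool) 2 = true from rfl]
      exact ⟨h0, h1⟩
  | app a b ha hb iha ihb =>
    intro i₀ i₁ j c₀ c₁ h0 h1 hd b₀ b₁
    simp only [] at h0 h1
    obtain ⟨s₀, j₀, hj₀, hA₀, hB₀⟩ := t2_eq_r h0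
    obtain ⟨s₁, j₁, hj₁, hA₁, hB₁⟩ := t2_eq_r h1
    have hjj : j₁ = j₀ := by omega
    subst hjj
    -- index facts
    rcases hB₀ with ⟨hb₀, hi₀⟩ | ⟨hb₀, hi₀⟩ <;> rcases hB₁ with ⟨hb₁, hi₁⟩ | ⟨hb₁, hi₁⟩ <;>
    [ (have hda : (4*s₀+2) + 2 ≤ 4*s₁+2 ∨ (4*s₁+2) + 2 ≤ 4*s₀+2 := by omega;
       have hdb : (4*s₀) + 2 ≤ 4*s₁ ∨ (4*s₁) + 2 ≤ 4*s₀ := by omega);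
      (have hda : (4*s₀+2) + 2 ≤ 4*s₁+2 ∨ (4*s₁+2) + 2 ≤ 4*s₀+2 := by omega;
       have hdb : (4*s₀) + 2 ≤ 4*s₁+2 ∨ (4*s₁+2) + 2 ≤ 4*s₀ := by omega);
      (have hda : (4*s₀+2) + 2 ≤ 4*s₁+2 ∨ (4*s₁+2) + 2 ≤ 4*s₀+2 := by omega;
       have hdb : (4*s₀+2) + 2 ≤ 4*s₁ ∨ (4*s₁) + 2 ≤ 4*s₀+2 := by omega);
      (have hda : (4*s₀+2) + 2 ≤ 4*s₁+2 ∨ (4*s₁+2) + 2 ≤ 4*s₀+2 := by omega;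
       have hdb : (4*s₀+2) + 2 ≤ 4*s₁+2 ∨ (4*s₁+2) + 2 ≤ 4*s₀+2 := by omega)] <;>
    · have haAll := iha _ _ _ c₀ c₁ hA₀ hA₁ hda b₀ b₁
      have hbAll := ihb _ _ _ c₀ c₁ hb₀ hb₁ hdb b₀ b₁
      constructor
      · show t2 (a ![b₀, b₁, false]) (b ![b₀, b₁, false]) = A2.r i₀ j
        rw [haAll.1, hbAll.1]
        rw [hA₀, hb₀] at h0
        exact h0
      · show t2 (a ![b₀, b₁, true]) (b ![b₀, b₁, true]) = A2.r i₁ j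
        rw [haAll.2, hbAll.2]
        rw [hA₁, hb₁] at h1
        exact h1

lemma oneVar {h : (Fin 3 → Bool) → A2} (hm : M111 h) :
    (∀ b₀ b₁ b₂ : Bool, ¬(b₀ = true ∧ b₁ = true) → ∃ i j, h ![b₀, b₁, b₂] = A2.r i j) →
    ∃ (w : Fin 3) (A₀ L₀ A₁ L₁ : ℕ), ∀ b₀ b₁ b₂ : Bool,
      h ![b₀, b₁, b₂] = if ![b₀, b₁, b₂] w then A2.r A₁ L₁ else A2.r A₀ L₀ := by
  induction hm with
  | gen i x y =>
    intro hr
    fin_cases i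
    · obtain ⟨A₀, L₀, hx⟩ := hr false false false (by simp)
      obtain ⟨A₁, L₁, hy⟩ := hr true false false (by simp)
      simp at hx hy
      refine ⟨0, A₀, L₀, A₁, L₁, fun b₀ b₁ b₂ => ?_⟩
      simp only [hx, hy]
      rfl
    · obtain ⟨A₀, L₀, hx⟩ := hr false false false (by simp)
      obtain ⟨A₁, L₁, hy⟩ := hr false true false (by simp)
      simp at hx hy
      refine ⟨1, A₀, L₀, A₁, L₁, fun b₀ b₁ b₂ => ?_⟩
      simp only [hx, hy]
      rfl
    · obtain ⟨A₀, L₀, hx⟩ := hr false false false (by simp)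
      obtain ⟨A₁, L₁, hy⟩ := hr false false true (by simp)
      simp at hx hy
      refine ⟨2, A₀, L₀, A₁, L₁, fun b₀ b₁ b₂ => ?_⟩
      simp only [hx, hy]
      rfl
  | app a b ha hb iha ihb =>
    intro hr
    have hra : ∀ b₀ b₁ b₂ : Bool, ¬(b₀ = true ∧ b₁ = true) → ∃ i j, a ![b₀, b₁, b₂] = A2.r i j := by
      intro b₀ b₁ b₂ hne
      obtain ⟨i, j, e⟩ := hr b₀ b₁ b₂ hne
      obtain ⟨s, j', _, hA, _⟩ := t2_eq_r e
      exact ⟨4*s+2, j', hA⟩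
    have hrb : ∀ b₀ b₁ b₂ : Bool, ¬(b₀ = true ∧ b₁ = true) → ∃ i j, b ![b₀, b₁, b₂] = A2.r i j := by
      intro b₀ b₁ b₂ hne
      obtain ⟨i, j, e⟩ := hr b₀ b₁ b₂ hne
      obtain ⟨s, j', _, _, hB⟩ := t2_eq_r e
      rcases hB with ⟨hB, _⟩ | ⟨hB, _⟩
      · exact ⟨4*s, j', hB⟩
      · exact ⟨4*s+2, j', hB⟩
    obtain ⟨wa, A₀, L₀, A₁, L₁, hAa⟩ := iha hra
    obtain ⟨wb, B₀, K₀, B₁, K₁, hBb⟩ := ihb hrb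
    by_cases hw : wa = wb
    · subst hw
      obtain ⟨i0, j0, e0⟩ := hr false false false (by simp)
      have hf : (![false,false,false] : Fin 3 → Bool) wa = false := by fin_cases wa <;> rfl
      rw [show ((fun f => t2 (a f) (b f)) ![false,false,false]) = t2 (a ![false,false,false]) (b ![false,false,false]) from rfl,
        hAa false false false, hBb false false false, hf] at e0
      simp only [Bool.false_eq_true, if_false] at e0
      obtain ⟨q₀, q₁, q₂, hreg, hqt⟩ :
          ∃ q₀ q₁ q₂ : Bool, ¬(q₀ = true ∧ q₁ = true) ∧ (![q₀,q₁,q₂] : Fin 3 → Bool) wa = true := by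
        fin_cases wa
        · exact ⟨true, false, false, by simp, rfl⟩
        · exact ⟨false, true, false, by simp, rfl⟩
        · exact ⟨false, false, true, by simp, rfl⟩
      obtain ⟨i1, j1, e1⟩ := hr q₀ q₁ q₂ hreg
      rw [show ((fun f => t2 (a f) (b f)) ![q₀,q₁,q₂]) = t2 (a ![q₀,q₁,q₂]) (b ![q₀,q₁,q₂]) from rfl,
        hAa q₀ q₁ q₂, hBb q₀ q₁ q₂, hqt] at e1
      simp only [if_true] at e1
      refine ⟨wa, i0, j0, i1, j1, fun b₀ b₁ b₂ => ?_⟩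
      show t2 (a ![b₀,b₁,b₂]) (b ![b₀,b₁,b₂]) = _
      rw [hAa b₀ b₁ b₂, hBb b₀ b₁ b₂]
      cases hfb : (![b₀,b₁,b₂] : Fin 3 → Bool) wa
      · simp only [hfb, Bool.false_eq_true, if_false]; exact e0
      · simp only [hfb, if_true]; exact e1
    · -- wa ≠ wb
      have hpts : ∀ s u : Bool, ¬(s = true ∧ u = true) →
          ∃ q₀ q₁ q₂ : Bool, ¬(q₀ = true ∧ q₁ = true) ∧
            (![q₀,q₁,q₂] : Fin 3 → Bool) wa = s ∧ (![q₀,q₁,q₂] : Fin 3 → Bool) wb = u := by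
        intro s u hsu
        fin_cases wa <;> fin_cases wb
        · exact absurd rfl hw
        · exact ⟨s, u, false, hsu, rfl, rfl⟩
        · exact ⟨s, false, u, by simp, rfl, rfl⟩
        · exact ⟨u, s, false, fun ⟨h1, h2⟩ => hsu ⟨h2, h1⟩, rfl, rfl⟩
        · exact absurd rfl hw
        · exact ⟨false, s, u, by simp, rfl, rfl⟩
        · exact ⟨u, false, s, by simp, rfl, rfl⟩
        · exact ⟨false, u, s, by simp, rfl, rfl⟩
        · exact absurd rfl hw
      obtain ⟨q₀, q₁, q₂, hreg, hqa, hqb⟩ := hpts false false (by simp)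
      obtain ⟨i00, j00, e00⟩ := hr q₀ q₁ q₂ hreg
      rw [show ((fun f => t2 (a f) (b f)) ![q₀,q₁,q₂]) = t2 (a ![q₀,q₁,q₂]) (b ![q₀,q₁,q₂]) from rfl,
        hAa q₀ q₁ q₂, hBb q₀ q₁ q₂, hqa, hqb] at e00
      simp only [Bool.false_eq_true, if_false] at e00
      obtain ⟨p₀, p₁, p₂, hreg', hpa, hpb⟩ := hpts false true (by simp)
      obtain ⟨i01, j01, e01⟩ := hr p₀ p₁ p₂ hreg'
      rw [show ((fun f => t2 (a f) (b f)) ![p₀,p₁,p₂]) = t2 (a ![p₀,p₁,p₂]) (b ![p₀,p₁,p₂]) from rfl,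
        hAa p₀ p₁ p₂, hBb p₀ p₁ p₂, hpa, hpb] at e01
      simp only [Bool.false_eq_true, if_false, if_true] at e01
      obtain ⟨r₀, r₁, r₂, hreg'', hra'', hrb''⟩ := hpts true false (by simp)
      obtain ⟨i10, j10, e10⟩ := hr r₀ r₁ r₂ hreg''
      rw [show ((fun f => t2 (a f) (b f)) ![r₀,r₁,r₂]) = t2 (a ![r₀,r₁,r₂]) (b ![r₀,r₁,r₂]) from rfl,
        hAa r₀ r₁ r₂, hBb r₀ r₁ r₂, hra'', hrb''] at e10
      simp only [Bool.false_eq_true, if_false, if_true] at e10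
      -- extract numeric facts
      obtain ⟨s1, l1, _, hA1, hB1⟩ := t2_eq_r e00
      obtain ⟨s2, l2, _, hA2, hB2⟩ := t2_eq_r e01
      obtain ⟨s3, l3, _, hA3, hB3⟩ := t2_eq_r e10
      injection hA1 with eA1 eL1
      injection hA3 with eA3 eL3
      have hB₀1 : (B₀ = 4*s1 ∨ B₀ = 4*s1+2) ∧ K₀ = l1 := by
        rcases hB1 with ⟨e, _⟩ | ⟨e, _⟩ <;> (injection e with e1 e2)
        · exact ⟨Or.inl e1, e2⟩
        · exact ⟨Or.inr e1, e2⟩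
      have hB₀3 : (B₀ = 4*s3 ∨ B₀ = 4*s3+2) ∧ K₀ = l3 := by
        rcases hB3 with ⟨e, _⟩ | ⟨e, _⟩ <;> (injection e with e1 e2)
        · exact ⟨Or.inl e1, e2⟩
        · exact ⟨Or.inr e1, e2⟩
      have hs13 : s1 = s3 := by rcases hB₀1.1 with e | e <;> rcases hB₀3.1 with e' | e' <;> omega
      have hxy : A2.r A₁ L₁ = A2.r A₀ L₀ := by
        have : A₁ = A₀ := by omega
        have hL : L₁ = L₀ := by
          rw [eL1, eL3, ← hB₀1.2, ← hB₀3.2]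
        rw [this, hL]
      refine ⟨wb, i00, j00, i01, j01, fun b₀ b₁ b₂ => ?_⟩
      show t2 (a ![b₀,b₁,b₂]) (b ![b₀,b₁,b₂]) = _
      rw [hAa b₀ b₁ b₂, hBb b₀ b₁ b₂, hxy, ite_self]
      cases hfb : (![b₀,b₁,b₂] : Fin 3 → Bool) wb
      · simp only [hfb, Bool.false_eq_true, if_false]; exact e00
      · simp only [hfb, if_true]; exact e01

lemma handleII {a b : (Fin 3 → Bool) → A2} (hma : M111 a) (hmb : M111 b)
    (c₀ c₁ : Bool) (m J : ℕ)
    (hd : (a ![c₀,c₁,false] = A2.r (4*m+6) J ∧ b ![c₀,c₁,false] = A2.r (4*m+4) J ∧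
           a ![c₀,c₁,true] = A2.r (4*m+2) J ∧ b ![c₀,c₁,true] = A2.r (4*m+2) J) ∨
          (a ![c₀,c₁,false] = A2.r (4*m+2) J ∧ b ![c₀,c₁,false] = A2.r (4*m+2) J ∧
           a ![c₀,c₁,true] = A2.r (4*m+6) J ∧ b ![c₀,c₁,true] = A2.r (4*m+4) J)) :
    t2 (a ![true,true,false]) (b ![true,true,false]) = t2 (a ![true,true,true]) (b ![true,true,true]) := by
  rcases hd with ⟨ha0, hb0, ha1, hb1⟩ | ⟨ha0, hb0, ha1, hb1⟩
  · have haAll := active hma (4*m+6) (4*m+2) J c₀ c₁ ha0 ha1 (Or.inr (by omega)) true true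
    have hbAll := active hmb (4*m+4) (4*m+2) J c₀ c₁ hb0 hb1 (Or.inr (by omega)) true true
    rw [haAll.1, haAll.2, hbAll.1, hbAll.2]
    exact t2_collapseII m J
  · have haAll := active hma (4*m+2) (4*m+6) J c₀ c₁ ha0 ha1 (Or.inl (by omega)) true true
    have hbAll := active hmb (4*m+2) (4*m+4) J c₀ c₁ hb0 hb1 (Or.inl (by omega)) true true
    rw [haAll.1, haAll.2, hbAll.1, hbAll.2]
    exact (t2_collapseII m J).symm

lemma handleI {a b : (Fin 3 → Bool) → A2} (hma : M111 a) (hmb : M111 b)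
    (c₀ c₁ : Bool) (c J : ℕ)
    (hyy : (b ![c₀,c₁,false] = A2.r (4*c) J ∧ b ![c₀,c₁,true] = A2.r (4*c+2) J) ∨
           (b ![c₀,c₁,false] = A2.r (4*c+2) J ∧ b ![c₀,c₁,true] = A2.r (4*c) J))
    (hE : ∀ b₀ b₁ : Bool, ¬(b₀ = true ∧ b₁ = true) →
      t2 (a ![b₀,b₁,false]) (b ![b₀,b₁,false]) = t2 (a ![b₀,b₁,true]) (b ![b₀,b₁,true])) :
    t2 (a ![true,true,false]) (b ![true,true,false]) = t2 (a ![true,true,true]) (b ![true,true,true]) := by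
  obtain ⟨Bf, Bt, hBd, hball⟩ :
      ∃ Bf Bt : ℕ, ((Bf = 4*c ∧ Bt = 4*c+2) ∨ (Bf = 4*c+2 ∧ Bt = 4*c)) ∧
        (∀ b₀ b₁ : Bool, b ![b₀,b₁,false] = A2.r Bf J ∧ b ![b₀,b₁,true] = A2.r Bt J) := by
    rcases hyy with ⟨hb0, hb1⟩ | ⟨hb0, hb1⟩
    · exact ⟨4*c, 4*c+2, Or.inl ⟨rfl, rfl⟩, active hmb _ _ J c₀ c₁ hb0 hb1 (Or.inl (by omega))⟩
    · exact ⟨4*c+2, 4*c, Or.inr ⟨rfl, rfl⟩, active hmb _ _ J c₀ c₁ hb0 hb1 (Or.inr (by omega))⟩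
  have haconst : ∀ b₀ b₁ : Bool, ¬(b₀ = true ∧ b₁ = true) →
      a ![b₀,b₁,false] = A2.r (4*c) J ∧ a ![b₀,b₁,true] = A2.r (4*c) J := by
    intro b₀ b₁ hne
    have e := hE b₀ b₁ hne
    rw [(hball b₀ b₁).1, (hball b₀ b₁).2] at e
    rcases t2_eq e with ⟨ea, eb⟩ | ⟨c', J', hx, hx', hy⟩ | ⟨m', J', hII⟩
    · injection eb with e1 e2
      rcases hBd with ⟨g1, g2⟩ | ⟨g1, g2⟩ <;> omega
    · have hcc : c' = c ∧ J' = J := by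
        rcases hy with ⟨hy1, hy2⟩ | ⟨hy1, hy2⟩ <;>
          (injection hy1 with f1 f2; injection hy2 with f3 f4) <;>
          rcases hBd with ⟨g1, g2⟩ | ⟨g1, g2⟩ <;>
          exact ⟨by omega, by omega⟩
      obtain ⟨rfl, rfl⟩ := hcc
      exact ⟨hx, hx'⟩
    · exfalso
      rcases hII with ⟨_, hy1, _, hy2⟩ | ⟨_, hy1, _, hy2⟩ <;>
        (injection hy1 with f1 f2; injection hy2 with f3 f4) <;>
        rcases hBd with ⟨g1, g2⟩ | ⟨g1, g2⟩ <;> omega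
  have hra : ∀ b₀ b₁ b₂ : Bool, ¬(b₀ = true ∧ b₁ = true) → ∃ i j, a ![b₀,b₁,b₂] = A2.r i j := by
    intro b₀ b₁ b₂ hne
    cases b₂
    · exact ⟨4*c, J, (haconst b₀ b₁ hne).1⟩
    · exact ⟨4*c, J, (haconst b₀ b₁ hne).2⟩
  obtain ⟨w, A₀, L₀, A₁, L₁, hall⟩ := oneVar hma hra
  have h000 := hall false false false
  have hf : (![false,false,false] : Fin 3 → Bool) w = false := by fin_cases w <;> rfl
  rw [hf] at h000
  simp only [Bool.false_eq_true, if_false] at h000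
  have hA₀ : A2.r A₀ L₀ = A2.r (4*c) J := by
    rw [← h000]; exact (haconst false false (by simp)).1
  have hA₁ : A2.r A₁ L₁ = A2.r (4*c) J := by
    fin_cases w
    · have e := hall true false false
      simp at e
      rw [← e]; exact (haconst true false (by simp)).1
    · have e := hall false true false
      simp at e
      rw [← e]; exact (haconst false true (by simp)).1
    · have e := hall false false true
      simp at e
      rw [← e]; exact (haconst false false (by simp)).2
  have hap : ∀ k : Bool, a ![true,true,k] = A2.r (4*c) J := by
    intro k
    have e := hall true true k
    cases hfw : (![true,true,k] : Fin 3 → Bool) w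
    · rw [hfw] at e
      simp only [Bool.false_eq_true, if_false] at e
      exact e.trans hA₀
    · rw [hfw] at e
      simp only [if_true] at e
      exact e.trans hA₁
  rw [hap false, hap true, (hball true true).1, (hball true true).2]
  rcases hBd with ⟨g1, g2⟩ | ⟨g1, g2⟩ <;> subst g1 <;> subst g2
  · rw [t2_o c J (4*c) (Or.inl rfl), t2_o c J (4*c+2) (Or.inr rfl)]
  · rw [t2_o c J (4*c+2) (Or.inr rfl), t2_o c J (4*c) (Or.inl rfl)]

/-- `𝔸₂` is 2-step supernilpotent: for any cube `h ∈ M(1,1,1)`, if all three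
vertical (direction-2) support lines are constant then so is the pivot line. -/
theorem stmt9 (h : (Fin 3 → Bool) → A2) (hm : M111 h)
    (hsupp : ∀ b₀ b₁ : Bool, ¬(b₀ = true ∧ b₁ = true) →
      h ![b₀, b₁, false] = h ![b₀, b₁, true]) :
    h ![true, true, false] = h ![true, true, true] := by
  revert hsupp
  induction hm with
  | gen i x y =>
    intro hsupp
    fin_cases i
    · rfl
    · rfl
    · have e := hsupp false false (by simp)
      simp at e
      simp [e]
  | app a b ha hb iha ihb =>
    intro hsupp
    have hE : ∀ b₀ b₁ : Bool, ¬(b₀ = true ∧ b₁ = true) →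
        t2 (a ![b₀,b₁,false]) (b ![b₀,b₁,false]) = t2 (a ![b₀,b₁,true]) (b ![b₀,b₁,true]) :=
      fun b₀ b₁ hne => hsupp b₀ b₁ hne
    show t2 (a ![true,true,false]) (b ![true,true,false]) = t2 (a ![true,true,true]) (b ![true,true,true])
    rcases t2_eq (hE false false (by simp)) with ⟨ea1, eb1⟩ | ⟨c, J, _, _, hy⟩ | ⟨m, J, hII⟩
    rotate_left
    · exact handleI ha hb false false c J hy hE
    · exact handleII ha hb false false m J hII
    · rcases t2_eq (hE false true (by simp)) with ⟨ea2, eb2⟩ | ⟨c, J, _, _, hy⟩ | ⟨m, J, hII⟩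
      rotate_left
      · exact handleI ha hb false true c J hy hE
      · exact handleII ha hb false true m J hII
      · rcases t2_eq (hE true false (by simp)) with ⟨ea3, eb3⟩ | ⟨c, J, _, _, hy⟩ | ⟨m, J, hII⟩
        rotate_left
        · exact handleI ha hb true false c J hy hE
        · exact handleII ha hb true false m J hII
        · have hca := iha (fun b₀ b₁ hne => by
            cases b₀ <;> cases b₁
            · exact ea1
            · exact ea2
            · exact ea3
            · exact absurd ⟨rfl, rfl⟩ hne)
          have hcb := ihb (fun b₀ b₁ hne => by
            cases b₀ <;> cases b₁
            · exact eb1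
            · exact eb2
            · exact eb3
            · exact absurd ⟨rfl, rfl⟩ hne)
          rw [hca, hcb]
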